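/- For the finite-dimensional cubic map F^(m) : ℝ^{2m−1} → ℝ^{2m−1} from the Cauchy-Riemann equilibrium problem, with components F₁(a)₀ = λ₁(a₁)₀ − λ₂(a₁³)₀, F₁(a)_k = 2[−k(a₂)_k + λ₁(a₁)_k − λ₂(a₁³)_k] for 1 ≤ k < m, and F₂(a)_k = 2[−k(a₁)_k + (a₂)_k] for 1 ≤ k < m, the Jacobian DF^(m)(a) is a symmetric matrix for every a. -/

import Mathlib

/-- The first component `a₁` (indices `0,…,m−1`) of `a ∈ ℝ^{2m−1}`, extended by zero. -/
def a1get (m : ℕ) (a : Fin (2 * m - 1) → ℝ) (k : ℕ) : ℝ :=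
  if h : k < m ∧ 0 < m then a ⟨k, by omega⟩ else 0

/-- The second component `a₂` (indices `1,…,m−1`) of `a ∈ ℝ^{2m−1}`, extended by zero. -/
def a2get (m : ℕ) (a : Fin (2 * m - 1) → ℝ) (k : ℕ) : ℝ :=
  if h : 1 ≤ k ∧ k < m then a ⟨m - 1 + k, by omega⟩ else 0

/-- The symmetrized discrete cube `(a₁³)_k = (a₁∗a₁∗a₁)_k`, with `a₁` extended evenly to
negative indices and by zero beyond `m−1`. -/
noncomputable def cube (m : ℕ) (a : Fin (2 * m - 1) → ℝ) (k : ℤ) : ℝ :=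
  ∑' j : ℤ × ℤ,
    a1get m a j.1.natAbs * a1get m a j.2.natAbs * a1get m a (k - j.1 - j.2).natAbs

/-- The finite-dimensional Cauchy–Riemann equilibrium map `F^(m) : ℝ^{2m−1} → ℝ^{2m−1}`. -/
noncomputable def Fcr (m : ℕ) (lam1 lam2 : ℝ) (a : Fin (2 * m - 1) → ℝ)
    (i : Fin (2 * m - 1)) : ℝ :=
  if (i : ℕ) = 0 then lam1 * a1get m a 0 - lam2 * cube m a 0
  else if (i : ℕ) < m then
    2 * (-((i : ℕ) : ℝ) * a2get m a (i : ℕ) + lam1 * a1get m a (i : ℕ)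
        - lam2 * cube m a ((i : ℕ) : ℤ))
  else
    2 * (-((((i : ℕ) - (m - 1) : ℕ)) : ℝ) * a1get m a ((i : ℕ) - (m - 1))
        + a2get m a ((i : ℕ) - (m - 1)))

/-!
The map `F^(m)` is minus the gradient of the action
`S(a) = ∑ₖ (2k (a₁)ₖ (a₂)ₖ − (a₂)ₖ²) − (λ₁/2)(a₁²)₀ + (λ₂/4)(a₁⁴)₀`, a polynomial, so its
Jacobian is minus the Hessian of `S`, which is symmetric by Schwarz's theorem.
The only computation is the gradient. The quartic term is `Q(a,a,a,a)` for the fully symmetric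
form `Q(x,y,z,u) = ∑_{j₁+j₂+j₃+j₄=0} x_{j₁} y_{j₂} z_{j₃} u_{j₄}` on evenly extended
coefficients, so its derivative is `4 Q(v,a,a,a) = 4 ∑ⱼ vⱼ (a₁³)₋ⱼ`. Along the `i`-th basis
vector only `j = ±i` contribute, and since `a₁³` is even this gives `(a₁³)ᵢ` with weight `1`
for `i = 0` and `2` for `i ≥ 1`: exactly the weights in `F`.
-/

theorem exists_isSymm_hasFDerivAt_of_eq_fderiv_single {ι : Type*} [Fintype ι] [DecidableEq ι]
    {S : (ι → ℝ) → ℝ} {F : (ι → ℝ) → ι → ℝ} (hS : ContDiff ℝ 2 S)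
    (hF : ∀ b i, F b i = fderiv ℝ S b (Pi.single i 1)) (a : ι → ℝ) :
    ∃ J : Matrix ι ι ℝ, J.IsSymm ∧
      HasFDerivAt F (Matrix.mulVecLin J).toContinuousLinearMap a := by
  set D := fderiv ℝ (fderiv ℝ S) a
  let evalBasis : ((ι → ℝ) →L[ℝ] ℝ) →L[ℝ] ι → ℝ :=
    ContinuousLinearMap.pi fun i => ContinuousLinearMap.apply ℝ ℝ (Pi.single i 1)
  have hD : HasFDerivAt (fderiv ℝ S) D a :=
    ((hS.fderiv_right (m := 1) (by norm_num)).differentiable (by norm_num) a).hasFDerivAt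
  have hFS : F = evalBasis ∘ fderiv ℝ S := funext fun b => funext (hF b)
  refine ⟨LinearMap.toMatrix' (evalBasis.comp D : (ι → ℝ) →ₗ[ℝ] ι → ℝ), ?_, ?_⟩
  · ext i j
    have hsymm := (hS.contDiffAt (x := a)).isSymmSndFDerivAt (by simp)
    simpa [LinearMap.toMatrix'_apply, evalBasis, Pi.single_apply, eq_comm] using hsymm _ _
  · rw [← Matrix.toLin'_apply', Matrix.toLin'_toMatrix', hFS]
    exact evalBasis.hasFDerivAt.comp a hD

namespace CauchyRiemann

variable {m : ℕ}

noncomputable def evenCoeff (m : ℕ) (j : ℤ) : (Fin (2 * m - 1) → ℝ) →L[ℝ] ℝ :=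
  if h : j.natAbs < m then ContinuousLinearMap.proj ⟨j.natAbs, by omega⟩ else 0

noncomputable def secondCoeff (m : ℕ) (k : ℕ) : (Fin (2 * m - 1) → ℝ) →L[ℝ] ℝ :=
  if h : 1 ≤ k ∧ k < m then ContinuousLinearMap.proj ⟨m - 1 + k, by omega⟩ else 0

theorem evenCoeff_apply (j : ℤ) (a : Fin (2 * m - 1) → ℝ) :
    evenCoeff m j a = a1get m a j.natAbs := by
  unfold evenCoeff a1get
  by_cases h : j.natAbs < m
  · rw [dif_pos h, dif_pos ⟨h, by omega⟩]; rfl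
  · rw [dif_neg h, dif_neg (by tauto)]; rfl

theorem a1get_eq_evenCoeff (k : ℕ) (a : Fin (2 * m - 1) → ℝ) : a1get m a k = evenCoeff m k a := by
  rw [evenCoeff_apply, Int.natAbs_natCast]

theorem secondCoeff_apply (k : ℕ) (a : Fin (2 * m - 1) → ℝ) :
    secondCoeff m k a = a2get m a k := by
  unfold secondCoeff a2get
  split_ifs <;> rfl

theorem evenCoeff_neg (j : ℤ) : evenCoeff m (-j) = evenCoeff m j := by
  simp only [evenCoeff, Int.natAbs_neg]

noncomputable def evenSupport (m : ℕ) : Finset ℤ := Finset.Ioo (-(m : ℤ)) m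

theorem evenCoeff_eq_zero_of_notMem {j : ℤ} (hj : j ∉ evenSupport m) : evenCoeff m j = 0 :=
  dif_neg (by simp only [evenSupport, Finset.mem_Ioo] at hj; omega)

theorem evenCoeff_single_of_lt {i : Fin (2 * m - 1)} (hi : (i : ℕ) < m) (j : ℤ) :
    evenCoeff m j (Pi.single i 1) = if j.natAbs = i then 1 else 0 := by
  unfold evenCoeff
  split_ifs <;> simp_all [Fin.ext_iff]

theorem evenCoeff_single_of_le {i : Fin (2 * m - 1)} (hi : m ≤ i) (j : ℤ) :
    evenCoeff m j (Pi.single i 1) = 0 := by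
  unfold evenCoeff
  split_ifs <;> simp [Pi.single_apply, Fin.ext_iff]; omega

theorem secondCoeff_single_of_lt {i : Fin (2 * m - 1)} (hi : (i : ℕ) < m) (k : ℕ) :
    secondCoeff m k (Pi.single i 1) = 0 := by
  unfold secondCoeff
  split_ifs <;> simp [Pi.single_apply, Fin.ext_iff]; omega

theorem secondCoeff_single_of_le {i : Fin (2 * m - 1)} (hi : m ≤ i) (k : ℕ) :
    secondCoeff m k (Pi.single i 1) = if k = i - (m - 1) then 1 else 0 := by
  unfold secondCoeff
  split_ifs <;> simp_all [Pi.single_apply, Fin.ext_iff] <;> omega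

theorem tsum_evenCoeff_mul_eq_sum (x : Fin (2 * m - 1) → ℝ) (f : ℤ → ℝ) :
    ∑' j, evenCoeff m j x * f j = ∑ j ∈ evenSupport m, evenCoeff m j x * f j :=
  tsum_eq_sum fun j hj => by simp [evenCoeff_eq_zero_of_notMem hj]

theorem tsum_evenCoeff_single_mul {i : Fin (2 * m - 1)} (hi : (i : ℕ) < m) {f : ℤ → ℝ}
    (hf : ∀ j, f (-j) = f j) :
    ∑' j, evenCoeff m j (Pi.single i 1) * f j = (if (i : ℕ) = 0 then 1 else 2) * f i := by
  simp only [evenCoeff_single_of_lt hi, ite_mul, one_mul, zero_mul]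
  rw [tsum_eq_sum (s := {(i : ℤ), -(i : ℤ)}) fun j hj => by
    simp only [Finset.mem_insert, Finset.mem_singleton] at hj; rw [if_neg]; omega]
  by_cases h0 : (i : ℕ) = 0
  · simp [h0]
  · rw [Finset.sum_pair (by omega), if_pos (by simp), if_pos (by simp), hf, if_neg h0]
    ring

theorem cube_neg (a : Fin (2 * m - 1) → ℝ) (k : ℤ) : cube m a (-k) = cube m a k := by
  rw [cube, cube, ← (Equiv.neg (ℤ × ℤ)).tsum_eq]
  refine tsum_congr fun j => ?_
  simp only [Equiv.neg_apply, Prod.fst_neg, Prod.snd_neg, Int.natAbs_neg,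
    show -k - -j.1 - -j.2 = -(k - j.1 - j.2) by ring]

/-- `quadraticForm m x y = (x₁ ∗ y₁)₀` and `quarticForm m x y z u = (x₁ ∗ y₁ ∗ z₁ ∗ u₁)₀`. -/
noncomputable def quadraticForm (m : ℕ) (x y : Fin (2 * m - 1) → ℝ) : ℝ :=
  ∑' j : ℤ, evenCoeff m j x * evenCoeff m j y

noncomputable def quarticForm (m : ℕ) (x y z u : Fin (2 * m - 1) → ℝ) : ℝ :=
  ∑' j : ℤ × ℤ × ℤ, evenCoeff m j.1 x * evenCoeff m j.2.1 y * evenCoeff m j.2.2 z *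
    evenCoeff m (-(j.1 + j.2.1 + j.2.2)) u

section QuarticForm

variable (x y z u v a : Fin (2 * m - 1) → ℝ)

theorem quarticForm_summand_eq_zero {j : ℤ × ℤ × ℤ}
    (hj : j ∉ evenSupport m ×ˢ evenSupport m ×ˢ evenSupport m) :
    evenCoeff m j.1 x * evenCoeff m j.2.1 y * evenCoeff m j.2.2 z *
      evenCoeff m (-(j.1 + j.2.1 + j.2.2)) u = 0 := by
  simp only [Finset.mem_product, not_and_or] at hj
  rcases hj with h | h | h <;> simp [evenCoeff_eq_zero_of_notMem h]

theorem quarticForm_eq_sum :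
    quarticForm m x y z u = ∑ j ∈ evenSupport m ×ˢ evenSupport m ×ˢ evenSupport m,
      evenCoeff m j.1 x * evenCoeff m j.2.1 y * evenCoeff m j.2.2 z *
        evenCoeff m (-(j.1 + j.2.1 + j.2.2)) u :=
  tsum_eq_sum fun _ => quarticForm_summand_eq_zero x y z u

theorem quarticForm_comm₁₂ : quarticForm m x y z u = quarticForm m y x z u := by
  rw [quarticForm, ← (Function.Involutive.toPerm (fun j : ℤ × ℤ × ℤ => (j.2.1, j.1, j.2.2))
    fun _ => rfl).tsum_eq]
  refine tsum_congr fun j => ?_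
  simp only [Function.Involutive.toPerm, Equiv.coe_fn_mk, add_comm j.2.1 j.1]
  ring

theorem quarticForm_comm₂₃ : quarticForm m x y z u = quarticForm m x z y u := by
  rw [quarticForm, ← (Function.Involutive.toPerm (fun j : ℤ × ℤ × ℤ => (j.1, j.2.2, j.2.1))
    fun _ => rfl).tsum_eq]
  refine tsum_congr fun j => ?_
  simp only [Function.Involutive.toPerm, Equiv.coe_fn_mk, add_right_comm j.1 j.2.2 j.2.1]
  ring

theorem quarticForm_comm₃₄ : quarticForm m x y z u = quarticForm m x y u z := by
  rw [quarticForm, ← (Function.Involutive.toPerm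
    (fun j : ℤ × ℤ × ℤ => (j.1, j.2.1, -(j.1 + j.2.1 + j.2.2)))
    fun _ => Prod.ext rfl (Prod.ext rfl (by ring))).tsum_eq]
  refine tsum_congr fun j => ?_
  simp only [Function.Involutive.toPerm, Equiv.coe_fn_mk,
    show -(j.1 + j.2.1 + -(j.1 + j.2.1 + j.2.2)) = j.2.2 by ring]
  ring

theorem quarticForm_eq_tsum_cube :
    quarticForm m v a a a = ∑' j, evenCoeff m j v * cube m a (-j) := by
  rw [quarticForm, Summable.tsum_prod
    (summable_of_ne_finset_zero fun _ => quarticForm_summand_eq_zero v a a a)]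
  refine tsum_congr fun j => ?_
  rw [cube, ← tsum_mul_left]
  refine tsum_congr fun p => ?_
  simp only [evenCoeff_apply, show -j - p.1 - p.2 = -(j + p.1 + p.2) by ring]
  ring

end QuarticForm

section Derivatives

variable (v a : Fin (2 * m - 1) → ℝ)

theorem contDiff_quadraticForm_diag : ContDiff ℝ 2 fun b => quadraticForm m b b := by
  simp only [quadraticForm, tsum_evenCoeff_mul_eq_sum]
  fun_prop

theorem fderiv_quadraticForm_diag :
    fderiv ℝ (fun b => quadraticForm m b b) a v = 2 * quadraticForm m v a := by
  have h : HasFDerivAt (fun b => ∑ j ∈ evenSupport m, evenCoeff m j b * evenCoeff m j b) _ a :=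
    HasFDerivAt.fun_sum fun j _ => (evenCoeff m j).hasFDerivAt.mul (evenCoeff m j).hasFDerivAt
  rw [show (fun b => quadraticForm m b b) = _ from funext fun b => tsum_evenCoeff_mul_eq_sum b _,
    h.fderiv, quadraticForm, tsum_evenCoeff_mul_eq_sum, Finset.mul_sum]
  simp only [sum_apply, add_apply, smul_apply, smul_eq_mul]
  exact Finset.sum_congr rfl fun j _ => by ring

theorem contDiff_quarticForm_diag : ContDiff ℝ 2 fun b => quarticForm m b b b b := by
  simp only [quarticForm_eq_sum]
  fun_prop

theorem fderiv_quarticForm_diag :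
    fderiv ℝ (fun b => quarticForm m b b b b) a v = 4 * quarticForm m v a a a := by
  have h : HasFDerivAt (fun b => ∑ j ∈ evenSupport m ×ˢ evenSupport m ×ˢ evenSupport m,
      evenCoeff m j.1 b * evenCoeff m j.2.1 b * evenCoeff m j.2.2 b *
        evenCoeff m (-(j.1 + j.2.1 + j.2.2)) b) _ a :=
    HasFDerivAt.fun_sum fun j _ => (((evenCoeff m _).hasFDerivAt.mul
      (evenCoeff m _).hasFDerivAt).mul (evenCoeff m _).hasFDerivAt).mul (evenCoeff m _).hasFDerivAt
  have h₂ : quarticForm m a v a a = quarticForm m v a a a := quarticForm_comm₁₂ ..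
  have h₃ : quarticForm m a a v a = quarticForm m v a a a := by
    rw [quarticForm_comm₂₃, quarticForm_comm₁₂]
  have h₄ : quarticForm m a a a v = quarticForm m v a a a := by
    rw [quarticForm_comm₃₄, quarticForm_comm₂₃, quarticForm_comm₁₂]
  rw [show (fun b => quarticForm m b b b b) = _ from funext fun b => quarticForm_eq_sum b b b b,
    h.fderiv, show 4 * quarticForm m v a a a = quarticForm m v a a a + quarticForm m a v a a +
      quarticForm m a a v a + quarticForm m a a a v by rw [h₂, h₃, h₄]; ring]
  simp only [quarticForm_eq_sum, ← Finset.sum_add_distrib, sum_apply, add_apply, smul_apply,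
    smul_eq_mul, Pi.mul_apply]
  exact Finset.sum_congr rfl fun j _ => by ring

noncomputable def coupling (m : ℕ) (a : Fin (2 * m - 1) → ℝ) : ℝ :=
  ∑ k ∈ Finset.range m,
    (2 * k * evenCoeff m k a * secondCoeff m k a - secondCoeff m k a * secondCoeff m k a)

theorem contDiff_coupling : ContDiff ℝ 2 (coupling m) := by
  unfold coupling
  fun_prop

theorem fderiv_coupling :
    fderiv ℝ (coupling m) a v = ∑ k ∈ Finset.range m,
      (2 * k * (evenCoeff m k v * secondCoeff m k a + evenCoeff m k a * secondCoeff m k v) -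
        2 * secondCoeff m k a * secondCoeff m k v) := by
  have h : HasFDerivAt (coupling m) _ a := HasFDerivAt.fun_sum fun k _ =>
    (((evenCoeff m k).hasFDerivAt.const_mul (2 * k : ℝ)).mul (secondCoeff m k).hasFDerivAt).sub
      ((secondCoeff m k).hasFDerivAt.mul (secondCoeff m k).hasFDerivAt)
  rw [h.fderiv]
  simp only [sum_apply, add_apply, sub_apply, smul_apply, smul_eq_mul]
  exact Finset.sum_congr rfl fun k _ => by ring

end Derivatives

noncomputable def action (m : ℕ) (lam1 lam2 : ℝ) (a : Fin (2 * m - 1) → ℝ) : ℝ :=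
  coupling m a - lam1 / 2 * quadraticForm m a a + lam2 / 4 * quarticForm m a a a a

variable (lam1 lam2 : ℝ) (v b : Fin (2 * m - 1) → ℝ)

theorem contDiff_action : ContDiff ℝ 2 (action m lam1 lam2) :=
  (contDiff_coupling.sub (contDiff_const.mul contDiff_quadraticForm_diag)).add
    (contDiff_const.mul contDiff_quarticForm_diag)

theorem fderiv_action :
    fderiv ℝ (action m lam1 lam2) b v =
      fderiv ℝ (coupling m) b v - lam1 * quadraticForm m v b + lam2 * quarticForm m v b b b := by
  have hasFDerivAt_of_contDiff {f : (Fin (2 * m - 1) → ℝ) → ℝ} (hf : ContDiff ℝ 2 f) :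
      HasFDerivAt f (fderiv ℝ f b) b :=
    (hf.differentiable (by norm_num) b).hasFDerivAt
  have h : HasFDerivAt (action m lam1 lam2) _ b :=
    ((hasFDerivAt_of_contDiff contDiff_coupling).sub
      ((hasFDerivAt_of_contDiff contDiff_quadraticForm_diag).const_mul (lam1 / 2))).add
      ((hasFDerivAt_of_contDiff contDiff_quarticForm_diag).const_mul (lam2 / 4))
  rw [h.fderiv]
  simp only [add_apply, sub_apply, smul_apply, smul_eq_mul, fderiv_quadraticForm_diag,
    fderiv_quarticForm_diag]
  ring

theorem fderiv_action_single (i : Fin (2 * m - 1)) :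
    fderiv ℝ (action m lam1 lam2) b (Pi.single i 1) = -Fcr m lam1 lam2 b i := by
  rw [fderiv_action, fderiv_coupling, quadraticForm, quarticForm_eq_tsum_cube]
  unfold Fcr
  simp only [a1get_eq_evenCoeff, ← secondCoeff_apply]
  by_cases hi : (i : ℕ) < m
  · rw [tsum_evenCoeff_single_mul hi fun j => by rw [evenCoeff_neg],
      tsum_evenCoeff_single_mul hi fun j => by rw [neg_neg, cube_neg], cube_neg]
    simp only [evenCoeff_single_of_lt hi, secondCoeff_single_of_lt hi, Int.natAbs_natCast,
      mul_zero, add_zero, sub_zero, ite_mul, one_mul, zero_mul, mul_ite, Finset.sum_ite_eq',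
      Finset.mem_range, if_pos hi]
    rcases eq_or_ne (i : ℕ) 0 with h0 | h0
    · simp only [h0, if_true, Nat.cast_zero]
      ring
    · simp only [if_neg h0]
      ring
  · have hk : (i : ℕ) - (m - 1) < m := by omega
    simp only [evenCoeff_single_of_le (not_lt.mp hi), secondCoeff_single_of_le (not_lt.mp hi),
      zero_mul, mul_zero, zero_add, tsum_zero, mul_ite, mul_one, Finset.sum_sub_distrib,
      Finset.sum_ite_eq', Finset.mem_range, if_pos hk, if_neg hi,
      if_neg (show (i : ℕ) ≠ 0 by omega)]
    ring

end CauchyRiemann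

theorem Fcr_jacobian_symmetric_general (m : ℕ) (lam1 lam2 : ℝ)
    (a : Fin (2 * m - 1) → ℝ) :
    ∃ J : Matrix (Fin (2 * m - 1)) (Fin (2 * m - 1)) ℝ,
      J.IsSymm ∧
      HasFDerivAt (Fcr m lam1 lam2) (Matrix.mulVecLin J).toContinuousLinearMap a :=
  exists_isSymm_hasFDerivAt_of_eq_fderiv_single (CauchyRiemann.contDiff_action lam1 lam2).neg
    (fun b i => by
      rw [fderiv_fun_neg, neg_apply, CauchyRiemann.fderiv_action_single, neg_neg])
    a

/-- The Jacobian `DF^(m)(a)` of the Cauchy–Riemann map is a symmetric matrix for every `a`. -/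
theorem Fcr_jacobian_symmetric (m : ℕ) (hm : 1 ≤ m) (lam1 lam2 : ℝ)
    (a : Fin (2 * m - 1) → ℝ) :
    ∃ J : Matrix (Fin (2 * m - 1)) (Fin (2 * m - 1)) ℝ,
      J.IsSymm ∧
      HasFDerivAt (Fcr m lam1 lam2) (Matrix.mulVecLin J).toContinuousLinearMap a :=
  Fcr_jacobian_symmetric_general m lam1 lam2 a
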